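/- arXiv:1705.06349 — 3 statements merged into one kernel-verified Lean document; each statement's English description precedes it below -/
import Mathlib

section
/- For every real-valued function θ with θ(1) ≥ 2 and θ(n) ≥ n for all n, let B_θ be the set of positive integers containing 1 and all n ≥ 2 whose prime factorization n = p₁^{α₁}···p_k^{α_k} with p₁ < p₂ < ... < p_k satisfies p_i ≤ θ(p₁^{α₁}···p_{i-1}^{α_{i-1}}) for all 1 ≤ i ≤ k. Then every natural number m factors uniquely as m = n·r where n ∈ B_θ and the smallest prime factor of r exceeds θ(n). -/
open scoped Classical

/-- Membership in the set `B_θ`: `n ≥ 1` and each prime `p` dividing `n` satisfies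
`p ≤ θ` applied to the product of the prime powers in `n` with primes smaller than `p`. -/
def InB (θ : ℕ → ℝ) (n : ℕ) : Prop :=
  0 < n ∧ ∀ p ∈ n.primeFactors,
    (p : ℝ) ≤ θ (∏ q ∈ n.primeFactors.filter (· < p), q ^ n.factorization q)

/-! Write `partBelow t m` for the product of the prime powers `p ^ k ∥ m` with `p < t`, and call a
prime `q ∣ m` exceeding when `θ (partBelow q m) < q`. In a decomposition `m = n * r` every prime
of `n` is at most `n ≤ θ n`, hence below every prime of `r`. So a prime of `n` sees the same lower
part in `n` as in `m` and is not exceeding, while the least prime of `r` is exceeding, `n` being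
the part of `m` below it. Thus the primes of `r` are exactly the primes of `m` from the least
exceeding prime on, which determines `r` and `n`; cutting `m` at that prime (or nowhere, if there
is none) produces the decomposition. -/

namespace Nat

def partBelow (t m : ℕ) : ℕ := (m.factorization.filter (· < t)).prod (· ^ ·)

variable {s t m n r : ℕ}

theorem partBelow_eq_prod :
    partBelow t m = ∏ q ∈ m.primeFactors.filter (· < t), q ^ m.factorization q := by
  rw [partBelow, Finsupp.prod_filter_index, Finsupp.support_filter, support_factorization]

theorem factorization_partBelow :
    (partBelow t m).factorization = m.factorization.filter (· < t) :=
  prod_pow_factorization_eq_self fun _ hp =>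
    prime_of_mem_primeFactors (Finset.mem_filter.1 hp).1

theorem partBelow_ne_zero : partBelow t m ≠ 0 := by
  rw [partBelow_eq_prod, Finset.prod_ne_zero_iff]
  exact fun p hp => pow_ne_zero _ (prime_of_mem_primeFactors (Finset.mem_filter.1 hp).1).ne_zero

theorem partBelow_dvd : partBelow t m ∣ m := by
  rcases eq_or_ne m 0 with rfl | hm
  · exact dvd_zero _
  rw [← factorization_le_iff_dvd partBelow_ne_zero hm, factorization_partBelow]
  intro p
  by_cases hp : p < t <;> simp [hp]

theorem partBelow_partBelow (h : s ≤ t) : partBelow s (partBelow t m) = partBelow s m := by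
  rw [partBelow, factorization_partBelow, partBelow]
  congr 1
  ext p
  by_cases hp : p < s
  · simp [hp, hp.trans_le h]
  · simp [hp]

theorem partBelow_mul (hn : n ≠ 0) (hr : r ≠ 0) :
    partBelow t (n * r) = partBelow t n * partBelow t r := by
  rw [partBelow, factorization_mul hn hr, Finsupp.filter_add,
    Finsupp.prod_add_index' (fun _ => pow_zero _) (fun _ => pow_add _)]
  rfl

theorem partBelow_eq_self (hn : n ≠ 0) (h : ∀ p ∈ n.primeFactors, p < t) : partBelow t n = n := by
  rw [partBelow, (Finsupp.filter_eq_self_iff _ _).2, prod_factorization_pow_eq_self hn]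
  intro p hp
  exact h p (support_factorization n ▸ Finsupp.mem_support_iff.2 hp)

theorem partBelow_eq_one (h : ∀ p ∈ n.primeFactors, t ≤ p) : partBelow t n = 1 := by
  rw [partBelow, (Finsupp.filter_eq_zero_iff _ _).2, Finsupp.prod_zero_index]
  intro p hp
  by_contra hne
  exact absurd (h p (support_factorization n ▸ Finsupp.mem_support_iff.2 hne)) (not_le.2 hp)

theorem le_of_prime_dvd_div_partBelow {p : ℕ} (hp : p.Prime) (hm : m ≠ 0)
    (hd : p ∣ m / partBelow t m) : t ≤ p := by
  by_contra! hpt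
  have hq : m / partBelow t m ≠ 0 :=
    left_ne_zero_of_mul (by rwa [Nat.div_mul_cancel partBelow_dvd] : m / partBelow t m * _ ≠ 0)
  have := (hp.dvd_iff_one_le_factorization hq).1 hd
  rw [factorization_div partBelow_dvd, factorization_partBelow] at this
  simp [hpt] at this

theorem mem_primeFactors_partBelow {p : ℕ} :
    p ∈ (partBelow t m).primeFactors ↔ p ∈ m.primeFactors ∧ p < t := by
  rw [← support_factorization, factorization_partBelow, Finsupp.support_filter,
    Finset.mem_filter, support_factorization]

theorem partBelow_mul_of_le (hn : n ≠ 0) (hr : r ≠ 0) (h : ∀ p ∈ r.primeFactors, t ≤ p) :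
    partBelow t (n * r) = partBelow t n := by
  rw [partBelow_mul hn hr, partBelow_eq_one h, mul_one]

end Nat

open Nat

theorem inB_iff {θ : ℕ → ℝ} {n : ℕ} :
    InB θ n ↔ 0 < n ∧ ∀ p ∈ n.primeFactors, (p : ℝ) ≤ θ (partBelow p n) := by
  simp only [InB, partBelow_eq_prod]

def IsRough (x : ℝ) (r : ℕ) : Prop := ∀ p : ℕ, p.Prime → p ∣ r → x < p

theorem lt_of_dvd_of_isRough {x : ℝ} {n r p q : ℕ} (hn : 0 < n) (hx : (n : ℝ) ≤ x)
    (hr : IsRough x r) (hpn : p ∣ n) (hq : q.Prime) (hqr : q ∣ r) : p < q := by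
  have hpn' : (p : ℝ) ≤ n := by exact_mod_cast le_of_dvd hn hpn
  exact_mod_cast (hpn'.trans hx).trans_lt (hr q hq hqr)

noncomputable def exceedingPrimes (θ : ℕ → ℝ) (m : ℕ) : Finset ℕ :=
  m.primeFactors.filter fun q => θ (partBelow q m) < q

section Decomposition

variable {θ : ℕ → ℝ} {n r : ℕ}

theorem dvd_of_mem_exceedingPrimes (hθ : ∀ n : ℕ, 1 ≤ n → (n : ℝ) ≤ θ n) (hn : InB θ n)
    (hr : IsRough (θ n) r) {q : ℕ} (hq : q ∈ exceedingPrimes θ (n * r)) : q ∣ r := by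
  obtain ⟨hqm, hθq⟩ := Finset.mem_filter.1 hq
  obtain ⟨hqp, hqnr, hnr⟩ := mem_primeFactors.1 hqm
  refine (hqp.dvd_mul.1 hqnr).resolve_left fun hqn => ?_
  have hbelow : partBelow q (n * r) = partBelow q n :=
    partBelow_mul_of_le hn.1.ne' (right_ne_zero_of_mul hnr) fun p hp =>
      (lt_of_dvd_of_isRough hn.1 (hθ n hn.1) hr hqn (prime_of_mem_primeFactors hp)
        (dvd_of_mem_primeFactors hp)).le
  have := (inB_iff.1 hn).2 q (mem_primeFactors.2 ⟨hqp, hqn, hn.1.ne'⟩)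
  rw [hbelow] at hθq
  linarith

theorem minFac_mem_exceedingPrimes (hθ : ∀ n : ℕ, 1 ≤ n → (n : ℝ) ≤ θ n) (hn : InB θ n)
    (hr : IsRough (θ n) r) (hr0 : r ≠ 0) (hr1 : r ≠ 1) :
    r.minFac ∈ exceedingPrimes θ (n * r) := by
  have hq := minFac_prime hr1
  have hbelow : partBelow r.minFac (n * r) = n := by
    rw [partBelow_mul hn.1.ne' hr0, partBelow_eq_one fun p hp => minFac_le_of_dvd
        (prime_of_mem_primeFactors hp).two_le (dvd_of_mem_primeFactors hp), mul_one,
      partBelow_eq_self hn.1.ne' fun p hp => lt_of_dvd_of_isRough hn.1 (hθ n hn.1) hr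
        (dvd_of_mem_primeFactors hp) hq (minFac_dvd r)]
  refine Finset.mem_filter.2 ⟨mem_primeFactors.2 ⟨hq, dvd_mul_of_dvd_right (minFac_dvd r) n,
    mul_ne_zero hn.1.ne' hr0⟩, ?_⟩
  rw [hbelow]
  exact hr _ hq (minFac_dvd r)

theorem dvd_iff_exists_exceedingPrimes (hθ : ∀ n : ℕ, 1 ≤ n → (n : ℝ) ≤ θ n) (hn : InB θ n)
    (hr : IsRough (θ n) r) {p : ℕ} (hpm : p ∈ (n * r).primeFactors) :
    p ∣ r ↔ ∃ q ∈ exceedingPrimes θ (n * r), q ≤ p := by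
  obtain ⟨hp, hpnr, hnr⟩ := mem_primeFactors.1 hpm
  constructor
  · intro hpr
    exact ⟨r.minFac, minFac_mem_exceedingPrimes hθ hn hr (right_ne_zero_of_mul hnr)
      (fun h => hp.ne_one (Nat.dvd_one.1 (h ▸ hpr))), minFac_le_of_dvd hp.two_le hpr⟩
  · rintro ⟨q, hq, hqp⟩
    refine (hp.dvd_mul.1 hpnr).resolve_left fun hpn => ?_
    have := lt_of_dvd_of_isRough hn.1 (hθ n hn.1) hr hpn (prime_of_mem_primeFactors
      (Finset.mem_filter.1 hq).1) (dvd_of_mem_exceedingPrimes hθ hn hr hq)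
    omega

theorem dvd_of_dvd_of_mul_eq {n' r' : ℕ} (hθ : ∀ n : ℕ, 1 ≤ n → (n : ℝ) ≤ θ n)
    (hn : InB θ n) (hr : IsRough (θ n) r) (hn' : InB θ n') (hr' : IsRough (θ n') r')
    (hm : n * r ≠ 0) (h : n * r = n' * r') {p : ℕ} (hp : p.Prime) (hpr : p ∣ r) : p ∣ r' := by
  have hpm : p ∈ (n * r).primeFactors := mem_primeFactors.2 ⟨hp, dvd_mul_of_dvd_right hpr n, hm⟩
  have hq := (dvd_iff_exists_exceedingPrimes hθ hn hr hpm).1 hpr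
  rw [h] at hpm hq
  exact (dvd_iff_exists_exceedingPrimes hθ hn' hr' hpm).2 hq

theorem dvd_of_mul_eq {n' r' : ℕ} (hθ : ∀ n : ℕ, 1 ≤ n → (n : ℝ) ≤ θ n)
    (hn : InB θ n) (hr : IsRough (θ n) r) (hn' : InB θ n') (hr' : IsRough (θ n') r')
    (hm : n * r ≠ 0) (h : n * r = n' * r') : n ∣ n' := by
  have hcop : Coprime n r' := coprime_of_dvd fun k hk hkn hkr' =>
    (lt_irrefl k) (lt_of_dvd_of_isRough hn.1 (hθ n hn.1) hr hkn hk
      (dvd_of_dvd_of_mul_eq hθ hn' hr' hn hr (h ▸ hm) h.symm hk hkr'))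
  exact hcop.dvd_of_dvd_mul_right (h ▸ dvd_mul_right n r)

end Decomposition

theorem exists_inB_isRough (θ : ℕ → ℝ) {m : ℕ} (hm : m ≠ 0) :
    ∃ n r, n * r = m ∧ InB θ n ∧ IsRough (θ n) r := by
  rcases (exceedingPrimes θ m).eq_empty_or_nonempty with hE | hE
  · refine ⟨m, 1, mul_one m, inB_iff.2 ⟨pos_of_ne_zero hm, fun p hp => ?_⟩,
      fun p hp hp1 => absurd (Nat.dvd_one.1 hp1) hp.ne_one⟩
    by_contra! hlt
    exact Finset.notMem_empty p (hE ▸ Finset.mem_filter.2 ⟨hp, hlt⟩)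
  set q := (exceedingPrimes θ m).min' hE
  obtain ⟨-, hqθ⟩ := Finset.mem_filter.1 ((exceedingPrimes θ m).min'_mem hE)
  refine ⟨partBelow q m, m / partBelow q m, Nat.mul_div_cancel' partBelow_dvd,
    inB_iff.2 ⟨pos_of_ne_zero partBelow_ne_zero, fun p hp => ?_⟩,
    fun p hp hpr => hqθ.trans_le (by exact_mod_cast le_of_prime_dvd_div_partBelow hp hm hpr)⟩
  obtain ⟨hpm, hpq⟩ := mem_primeFactors_partBelow.1 hp
  rw [partBelow_partBelow hpq.le]
  by_contra! hlt
  exact (Finset.min'_le _ p (Finset.mem_filter.2 ⟨hpm, hlt⟩)).not_gt hpq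

theorem unique_factorization_B_general (θ : ℕ → ℝ)
    (hθ : ∀ n : ℕ, 1 ≤ n → (n : ℝ) ≤ θ n) (m : ℕ) (hm : 0 < m) :
    ∃! nr : ℕ × ℕ, nr.1 * nr.2 = m ∧ InB θ nr.1 ∧
      ∀ p : ℕ, p.Prime → p ∣ nr.2 → θ nr.1 < (p : ℝ) := by
  obtain ⟨n, r, hnr, hn, hr⟩ := exists_inB_isRough θ hm.ne'
  refine ⟨(n, r), ⟨hnr, hn, hr⟩, ?_⟩
  rintro ⟨n', r'⟩ ⟨hnr', hn', hr'⟩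
  have h : n * r = n' * r' := hnr.trans hnr'.symm
  have hm' : n * r ≠ 0 := hnr ▸ hm.ne'
  obtain rfl : n = n' := dvd_antisymm (dvd_of_mul_eq hθ hn hr hn' hr' hm' h)
    (dvd_of_mul_eq hθ hn' hr' hn hr (h ▸ hm') h.symm)
  exact Prod.ext rfl (Nat.eq_of_mul_eq_mul_left hn.1 h).symm

/-- Every natural number `m ≥ 1` factors uniquely as `m = n * r` with `n ∈ B_θ`
and every prime factor of `r` exceeding `θ(n)`. -/
theorem unique_factorization_B (θ : ℕ → ℝ) (hθ1 : 2 ≤ θ 1)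
    (hθ : ∀ n : ℕ, 1 ≤ n → (n : ℝ) ≤ θ n) (m : ℕ) (hm : 0 < m) :
    ∃! nr : ℕ × ℕ, nr.1 * nr.2 = m ∧ InB θ nr.1 ∧
      ∀ p : ℕ, p.Prime → p ∣ nr.2 → θ nr.1 < (p : ℝ) :=
  unique_factorization_B_general θ hθ m hm
end

section
/- Suppose χ is the indicator function of a set of integers whose counting function satisfies #{n ≤ x : χ(n)=1} ≤ a·x/(log x)^b for all x ≥ N, where a, b > 0 and N ≥ 3. Then ∑_{n > N} χ(n)·(log log log n − log log log N)/(n log n) ≤ a(1 + 1/log N)/(b² (log N)^b log log N). -/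
/-!
Partial summation against `A(t) = #{n ≤ t : n ∈ S, n > N}` with the weight
`f(t) = (log₃ t - log₃ N) / (t log t)`, which vanishes at `N`: the sum over `N < n ≤ x` equals
`f(x) A(x) - ∫_N^x f' A`. Discarding the positive part of `f'` and inserting
`A(t) ≤ a t / (log t)^b` bounds `-f' A` by `a (1 + 1/log N) (log₃ t - log₃ N) / (t (log t)^(1+b))`.
This integrand is at most the derivative of
`-((log₃ t - log₃ N)/b + 1/(b² log log N)) (log t)^(-b)`, so its integral over `[N, ∞)` is at most
`(log N)^(-b) / (b² log log N)`, while the boundary term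
`f(x) A(x) ≤ a (log₃ x - log₃ N) (log x)^(-1-b)` tends to `0`.
-/

open scoped Classical
open Real Set Filter MeasureTheory Topology

theorem one_lt_log_of_three_le {t : ℝ} (ht : 3 ≤ t) : 1 < log t := by
  rw [lt_log_iff_exp_lt (by linarith)]
  linarith [exp_one_lt_d9]

theorem log_log_log_le_log_log_log {s t : ℝ} (hs : 3 ≤ s) (hst : s ≤ t) :
    log (log (log s)) ≤ log (log (log t)) := by
  have hls := one_lt_log_of_three_le hs
  gcongr
  exact log_pos hls

theorem log_log_log_sub_div_nonneg {N t : ℝ} (hN : 3 ≤ N) (hNt : N ≤ t) :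
    0 ≤ (log (log (log t)) - log (log (log N))) / (t * log t) := by
  have := one_lt_log_of_three_le (hN.trans hNt)
  have : 0 < t := by linarith
  exact div_nonneg (sub_nonneg.2 (log_log_log_le_log_log_log hN hNt)) (by positivity)

theorem hasDerivAt_log_log_log {t : ℝ} (ht : 3 ≤ t) :
    HasDerivAt (fun u => log (log (log u))) (t⁻¹ / log t / log (log t)) t := by
  have hlt := one_lt_log_of_three_le ht
  exact ((hasDerivAt_log (by positivity)).log (by positivity)).log (log_pos hlt).ne'

theorem hasDerivAt_log_log_log_sub_div (C : ℝ) {t : ℝ} (ht : 3 ≤ t) :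
    HasDerivAt (fun u => (log (log (log u)) - C) / (u * log u))
      ((1 / log (log t) - (log (log (log t)) - C) * (log t + 1)) / (t * log t) ^ 2) t := by
  have hL := one_lt_log_of_three_le ht
  have hLL := log_pos hL
  have ht0 : 0 < t := by linarith
  have hv : HasDerivAt (fun u => u * log u) (1 * log t + t * t⁻¹) t :=
    (hasDerivAt_id' t).mul (hasDerivAt_log ht0.ne')
  refine (((hasDerivAt_log_log_log ht).sub_const C).div hv (by positivity)).congr_deriv ?_
  field_simp

theorem hasDerivAt_log_log_log_sub_div_add_mul_rpow_neg {b C D t : ℝ} (hb : b ≠ 0) (hD : D ≠ 0)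
    (ht : 3 ≤ t) :
    HasDerivAt (fun u => -((log (log (log u)) - C) / b + 1 / (b ^ 2 * D)) * log u ^ (-b))
      ((log (log (log t)) - C) * log t ^ (-b - 1) / t
        + log t ^ (-b - 1) / t * ((1 / D - 1 / log (log t)) / b)) t := by
  have hL : 1 < log t := one_lt_log_of_three_le ht
  have h := ((((hasDerivAt_log_log_log ht).sub_const C).div_const b).add_const
    (1 / (b ^ 2 * D))).neg.mul ((hasDerivAt_log (by positivity)).rpow_const (p := -b)
    (Or.inl (by positivity)))
  refine h.congr_deriv ?_
  simp only [Pi.neg_apply]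
  rw [rpow_sub_one (by positivity : log t ≠ 0)]
  field_simp
  ring

theorem continuousOn_log_log_log_sub_mul_rpow_div (C b : ℝ) {N M : ℝ} (hN : 3 ≤ N) :
    ContinuousOn (fun t => (log (log (log t)) - C) * log t ^ (-b - 1) / t) (Icc N M) := by
  intro t ht
  have h3 : 3 ≤ t := hN.trans ht.1
  have hL : 1 < log t := one_lt_log_of_three_le h3
  have h0 : t ≠ 0 := by positivity
  have h1 : log t ≠ 0 := by positivity
  have h2 : log (log t) ≠ 0 := (log_pos hL).ne'
  exact ContinuousAt.continuousWithinAt (by fun_prop (disch := simp [*]))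

theorem integral_log_log_log_sub_mul_rpow_le {b N M : ℝ} (hb : 0 < b) (hN : 3 ≤ N)
    (hNM : N ≤ M) :
    ∫ t in N..M, (log (log (log t)) - log (log (log N))) * log t ^ (-b - 1) / t
      ≤ log N ^ (-b) / (b ^ 2 * log (log N)) := by
  set C := log (log (log N))
  set D := log (log N)
  have hD : 0 < D := log_pos (one_lt_log_of_three_le hN)
  set Φ : ℝ → ℝ := fun t => -((log (log (log t)) - C) / b + 1 / (b ^ 2 * D)) * log t ^ (-b)
  have hΦ : ∀ t ∈ Icc N M, HasDerivAt Φ ((log (log (log t)) - C) * log t ^ (-b - 1) / t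
      + log t ^ (-b - 1) / t * ((1 / D - 1 / log (log t)) / b)) t :=
    fun t ht => hasDerivAt_log_log_log_sub_div_add_mul_rpow_neg hb.ne' hD.ne' (hN.trans ht.1)
  have hΦ' : ∀ t ∈ Ioo N M, (log (log (log t)) - C) * log t ^ (-b - 1) / t
      ≤ (log (log (log t)) - C) * log t ^ (-b - 1) / t
        + log t ^ (-b - 1) / t * ((1 / D - 1 / log (log t)) / b) := by
    intro t ht
    have h3 : 3 ≤ t := hN.trans ht.1.le
    have hL : 1 < log t := one_lt_log_of_three_le h3
    have hDt : D ≤ log (log t) :=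
      log_le_log (by linarith [one_lt_log_of_three_le hN]) (log_le_log (by linarith) ht.1.le)
    have : 1 / log (log t) ≤ 1 / D := one_div_le_one_div_of_le hD hDt
    exact le_add_of_nonneg_right
      (mul_nonneg (by positivity) (div_nonneg (sub_nonneg.2 this) hb.le))
  have hΦM : Φ M ≤ 0 := by
    have := one_lt_log_of_three_le (hN.trans hNM)
    have := sub_nonneg.2 (log_log_log_le_log_log_log hN hNM)
    simp only [Φ, neg_mul, neg_nonpos]
    positivity
  have hΦN : Φ N = -(log N ^ (-b) / (b ^ 2 * D)) := by
    simp only [Φ, C, sub_self, zero_div, zero_add]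
    ring
  calc _ ≤ Φ M - Φ N := intervalIntegral.integral_le_sub_of_hasDeriv_right_of_le hNM
        (fun t ht => (hΦ t ht).continuousAt.continuousWithinAt)
        (fun t ht => (hΦ t (Ioo_subset_Icc_self ht)).hasDerivWithinAt)
        (continuousOn_log_log_log_sub_mul_rpow_div C b hN).integrableOn_Icc hΦ'
    _ ≤ log N ^ (-b) / (b ^ 2 * D) := by linarith

theorem sum_mul_le_of_neg_deriv_mul_le (c : ℕ → ℝ) {f f' g : ℝ → ℝ} {a x : ℝ} (ha : 0 ≤ a)
    (hax : a ≤ x) (hf : ∀ t ∈ Icc a x, HasDerivAt f (f' t) t) (hf' : IntegrableOn f' (Icc a x))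
    (hg : IntegrableOn g (Ioc a x))
    (hfg : ∀ t ∈ Ioc a x, -(f' t * ∑ k ∈ Finset.Icc 0 ⌊t⌋₊, c k) ≤ g t) :
    ∑ k ∈ Finset.Ioc ⌊a⌋₊ ⌊x⌋₊, f k * c k ≤
      f x * ∑ k ∈ Finset.Icc 0 ⌊x⌋₊, c k - f a * ∑ k ∈ Finset.Icc 0 ⌊a⌋₊, c k
        + ∫ t in Ioc a x, g t := by
  have hderiv : EqOn (deriv f) f' (Icc a x) := fun t ht => (hf t ht).deriv
  have hint : IntegrableOn (deriv f) (Icc a x) := hf'.congr_fun hderiv.symm measurableSet_Icc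
  rw [sum_mul_eq_sub_sub_integral_mul c ha hax (fun t ht => (hf t ht).differentiableAt) hint,
    sub_eq_add_neg _ (integral _ _), ← integral_neg]
  refine add_le_add le_rfl (setIntegral_mono_on ((integrableOn_mul_sum_Icc c ha hint).mono_set
    Ioc_subset_Icc_self).neg hg measurableSet_Ioc fun t ht => ?_)
  rw [hderiv (Ioc_subset_Icc_self ht)]
  exact hfg t ht

theorem neg_deriv_log_log_log_sub_div_mul_le {a b t A N : ℝ} (ha : 0 ≤ a) (hN : 3 ≤ N)
    (hNt : N ≤ t) (hA0 : 0 ≤ A) (hA : A ≤ a * t / log t ^ b) :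
    -((1 / log (log t) - (log (log (log t)) - log (log (log N))) * (log t + 1)) / (t * log t) ^ 2
        * A)
      ≤ a * (1 + 1 / log N) * ((log (log (log t)) - log (log (log N))) * log t ^ (-b - 1) / t) := by
  set u := log (log (log t)) - log (log (log N))
  have hu : 0 ≤ u := sub_nonneg.2 (log_log_log_le_log_log_log hN hNt)
  have hLN := one_lt_log_of_three_le hN
  have hL : log N ≤ log t := log_le_log (by linarith) hNt
  have hLt : 0 < log t := by linarith
  have hLL : 0 < log (log t) := log_pos (by linarith)
  have ht : 0 < t := by linarith
  calc _ = u * (log t + 1) / (t * log t) ^ 2 * A - A / (log (log t) * (t * log t) ^ 2) := by ring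
    _ ≤ u * (log t + 1) / (t * log t) ^ 2 * A := sub_le_self _ (by positivity)
    _ ≤ u * (log t + 1) / (t * log t) ^ 2 * (a * t / log t ^ b) := by gcongr
    _ = a * (1 + 1 / log t) * (u * log t ^ (-b - 1) / t) := by
        rw [rpow_sub_one (by positivity), rpow_neg (by positivity)]
        field_simp
    _ ≤ a * (1 + 1 / log N) * (u * log t ^ (-b - 1) / t) := by gcongr

theorem sum_Ioc_mul_le_of_sum_Icc_le {c : ℕ → ℝ} {a b x : ℝ} {N : ℕ} (ha : 0 ≤ a) (hb : 0 < b)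
    (hN : 3 ≤ N) (hNx : N ≤ x) (hc : ∀ k, 0 ≤ c k)
    (hA : ∀ t : ℝ, N ≤ t → ∑ k ∈ Finset.Icc 0 ⌊t⌋₊, c k ≤ a * t / log t ^ b) :
    ∑ k ∈ Finset.Ioc N ⌊x⌋₊, (log (log (log k)) - log (log (log N))) / (k * log k) * c k ≤
      a * ((log (log (log x)) - log (log (log N))) * log x ^ (-b - 1))
        + a * (1 + 1 / log N) * (log N ^ (-b) / (b ^ 2 * log (log N))) := by
  have hN3 : (3 : ℝ) ≤ N := by exact_mod_cast hN
  set C := log (log (log (N : ℝ)))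
  have hf' : ContinuousOn (fun t =>
      (1 / log (log t) - (log (log (log t)) - C) * (log t + 1)) / (t * log t) ^ 2) (Icc N x) := by
    intro t ht
    have h3 : 3 ≤ t := hN3.trans ht.1
    have hL : 1 < log t := one_lt_log_of_three_le h3
    have h0 : t ≠ 0 := by positivity
    have h1 : log t ≠ 0 := by positivity
    have h2 : log (log t) ≠ 0 := (log_pos hL).ne'
    exact ContinuousAt.continuousWithinAt (by fun_prop (disch := simp [*]))
  have hg := continuousOn_log_log_log_sub_mul_rpow_div C b hN3 (M := x)
  have habel := sum_mul_le_of_neg_deriv_mul_le c (Nat.cast_nonneg N) hNx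
    (fun t ht => hasDerivAt_log_log_log_sub_div C (hN3.trans ht.1)) hf'.integrableOn_Icc
    ((hg.integrableOn_Icc.mono_set Ioc_subset_Icc_self).const_mul (a * (1 + 1 / log N)))
    (fun t ht => neg_deriv_log_log_log_sub_div_mul_le ha hN3 ht.1.le
      (Finset.sum_nonneg fun k _ => hc k) (hA t ht.1.le))
  have hboundary : (log (log (log x)) - C) / (x * log x) * ∑ k ∈ Finset.Icc 0 ⌊x⌋₊, c k
      ≤ a * ((log (log (log x)) - C) * log x ^ (-b - 1)) := by
    have hL := one_lt_log_of_three_le (hN3.trans hNx)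
    have hx : 0 < x := by linarith
    have hu : 0 ≤ log (log (log x)) - C := sub_nonneg.2 (log_log_log_le_log_log_log hN3 hNx)
    calc _ ≤ (log (log (log x)) - C) / (x * log x) * (a * x / log x ^ b) := by
          gcongr
          exact hA x hNx
      _ = _ := by
          rw [rpow_sub_one (by positivity), rpow_neg (by positivity)]
          field_simp
  have hintegral := integral_log_log_log_sub_mul_rpow_le hb hN3 hNx
  rw [intervalIntegral.integral_of_le hNx] at hintegral
  rw [Nat.floor_natCast, integral_const_mul] at habel
  simp only [C, sub_self, zero_div, zero_mul, sub_zero] at habel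
  refine habel.trans (add_le_add hboundary ?_)
  gcongr

theorem tendsto_log_log_log_sub_mul_rpow_atTop (C : ℝ) {b : ℝ} (hb : 0 < b) :
    Tendsto (fun x => (log (log (log x)) - C) * log x ^ (-b - 1)) atTop (𝓝 0) := by
  have hloglog : (fun x => log (log x)) =o[atTop] log :=
    isLittleO_log_id_atTop.comp_tendsto tendsto_log_atTop
  have hL3 : (fun x => log (log (log x)) - C) =o[atTop] log :=
    ((hloglog.comp_tendsto tendsto_log_atTop).trans hloglog).sub
      (Asymptotics.isLittleO_const_left.2
        (Or.inr (tendsto_norm_atTop_atTop.comp tendsto_log_atTop)))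
  refine (hL3.mul_isBigO (Asymptotics.isBigO_refl (fun x => log x ^ (-b - 1)) _)).trans_tendsto ?_
  have h := (tendsto_rpow_neg_atTop hb).comp tendsto_log_atTop
  refine h.congr' ?_
  filter_upwards [eventually_gt_atTop 1] with x hx
  have hL := log_pos hx
  simp only [Function.comp, rpow_sub_one hL.ne']
  field_simp

theorem sum_range_le_sum_Ioc {f : ℕ → ℝ} {N m n : ℕ} (hf : ∀ k, 0 ≤ f k)
    (hfN : ∀ k ≤ N, f k = 0) (hnm : n ≤ m + 1) :
    ∑ k ∈ Finset.range n, f k ≤ ∑ k ∈ Finset.Ioc N m, f k :=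
  calc ∑ k ∈ Finset.range n, f k ≤ ∑ k ∈ Finset.range (m + 1), f k :=
        Finset.sum_le_sum_of_subset_of_nonneg (Finset.range_subset_range.2 hnm)
          fun k _ _ => hf k
    _ = ∑ k ∈ Finset.Ioc N m, f k := by
        refine (Finset.sum_subset (fun k hk => ?_) fun k hk hk' => hfN k ?_).symm
        · simp only [Finset.mem_Ioc, Finset.mem_range] at hk ⊢; omega
        · simp only [Finset.mem_Ioc, Finset.mem_range, not_and, not_le] at hk hk' ⊢; omega

theorem sum_Icc_ite_le_card (S : Set ℕ) (N m : ℕ) :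
    ∑ k ∈ Finset.Icc 0 m, (if k ∈ S ∧ N < k then (1 : ℝ) else 0)
      ≤ ((Finset.Icc 1 m).filter (· ∈ S)).card := by
  rw [Finset.sum_boole]
  refine Nat.cast_le.2 (Finset.card_le_card fun k hk => ?_)
  simp only [Finset.mem_filter, Finset.mem_Icc] at hk ⊢
  exact ⟨⟨by omega, hk.1.2⟩, hk.2.1⟩

/-- Partial-summation tail bound: if the counting function of `S` satisfies
`#{n ≤ x : n ∈ S} ≤ a x/(log x)^b` for `x ≥ N`, then
`∑_{n > N, n ∈ S} (log₃ n - log₃ N)/(n log n) ≤ a(1 + 1/log N)/(b² (log N)^b log log N)`. -/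
theorem tail_sum_bound (S : Set ℕ) (a b : ℝ) (ha : 0 < a) (hb : 0 < b)
    (N : ℕ) (hN : 3 ≤ N)
    (hcount : ∀ x : ℝ, (N : ℝ) ≤ x →
      ((((Finset.Icc 1 ⌊x⌋₊).filter (· ∈ S)).card : ℝ)) ≤ a * x / (Real.log x) ^ b) :
    ∑' n : ℕ, (if n ∈ S ∧ N < n then
        (Real.log (Real.log (Real.log n)) - Real.log (Real.log (Real.log N))) /
          (n * Real.log n)
      else 0)
      ≤ a * (1 + 1 / Real.log N) /
          (b ^ 2 * (Real.log N) ^ b * Real.log (Real.log N)) := by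
  have hN3 : (3 : ℝ) ≤ N := by exact_mod_cast hN
  set f : ℝ → ℝ := fun t => (log (log (log t)) - log (log (log (N : ℝ)))) / (t * log t)
  set c : ℕ → ℝ := fun k => if k ∈ S ∧ N < k then 1 else 0
  have hfc : ∀ k : ℕ, 0 ≤ f k * c k := fun k => by
    by_cases hk : k ∈ S ∧ N < k
    · simpa [c, hk] using log_log_log_sub_div_nonneg hN3 (by exact_mod_cast hk.2.le)
    · simp [c, hk]
  set R := a * (1 + 1 / log N) * (log N ^ (-b) / (b ^ 2 * log (log N))) with hR_def
  have hR : R = a * (1 + 1 / log N) / (b ^ 2 * log N ^ b * log (log N)) := by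
    rw [hR_def, rpow_neg (log_pos (by linarith [one_lt_log_of_three_le hN3])).le]
    field_simp
  rw [show (fun n : ℕ => if n ∈ S ∧ N < n then f n else 0) = fun n : ℕ => f n * c n from
    funext fun n => by simp only [c, mul_ite, mul_one, mul_zero], ← hR]
  have hlim :=
    ((tendsto_log_log_log_sub_mul_rpow_atTop (log (log (log N))) hb).const_mul a).add_const R
  rw [mul_zero, zero_add] at hlim
  refine tsum_le_of_sum_range_le hfc fun n => ge_of_tendsto hlim ?_
  filter_upwards [eventually_ge_atTop (max (n : ℝ) N)] with x hx
  have hnx := Nat.le_floor (le_of_max_le_left hx)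
  refine (sum_range_le_sum_Ioc hfc (fun k hk => by simp [c]; omega) (by omega)).trans
    (sum_Ioc_mul_le_of_sum_Icc_le ha.le hb hN (le_of_max_le_right hx) (fun k => ?_)
      fun t ht => (sum_Icc_ite_le_card S N ⌊t⌋₊).trans (hcount t ht))
  positivity
end

section
/- If m is a φ-practical number, then its largest prime factor satisfies P⁺(m) ≤ 2 + √m. -/
/-- Largest prime factor, with `P⁺(1) = 1`. -/
def Pplus (m : ℕ) : ℕ := if m = 1 then 1 else m.primeFactors.sup id

/-- `n` is `φ`-practical: every natural number `k ≤ n` is a subsum of the multiset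
`{φ(d) : d ∣ n}`. -/
def PhiPractical (n : ℕ) : Prop :=
  0 < n ∧ ∀ k ≤ n, ∃ s ⊆ n.divisors, ∑ d ∈ s, Nat.totient d = k

/-- If `m` is `φ`-practical, then `P⁺(m) ≤ 2 + √m`. -/
theorem phiPractical_largest_prime_factor (m : ℕ) (hm : PhiPractical m) :
    (Pplus m : ℝ) ≤ 2 + Real.sqrt m := by
  obtain ⟨hm0, hsub⟩ := hm
  rcases eq_or_ne m 1 with rfl | h1
  · have : (0:ℝ) ≤ Real.sqrt 1 := Real.sqrt_nonneg 1
    simp only [Pplus, if_pos rfl]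
    push_cast
    linarith
  · have hne : m.primeFactors.Nonempty := Nat.nonempty_primeFactors.mpr (by omega)
    set p := Pplus m with hp
    have hpm : p ∈ m.primeFactors := by
      rw [hp, Pplus, if_neg h1]
      have h2 : m.primeFactors.sup id = m.primeFactors.sup' hne id :=
        (Finset.sup'_eq_sup hne id).symm
      rw [h2]
      exact Finset.sup'_mem _ (fun a ha b hb => by
        rcases le_total a b with h | h
        · simpa [max_eq_right h] using hb
        · simpa [max_eq_left h] using ha) _ _ _ (fun b hb => hb)
    have hpp : p.Prime := Nat.prime_of_mem_primeFactors hpm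
    have hpd : p ∣ m := Nat.dvd_of_mem_primeFactors hpm
    have hp2 : 2 ≤ p := hpp.two_le
    have hplm : p ≤ m := Nat.le_of_dvd hm0 hpd
    obtain ⟨s, hs, hsum⟩ := hsub (p - 2) (by omega)
    -- every d ∈ s is not divisible by p
    have hnotp : ∀ d ∈ s, ¬ p ∣ d := by
      intro d hd hpd'
      have hd' : d ∈ m.divisors := hs hd
      have hd0 : 0 < d := Nat.pos_of_mem_divisors hd'
      have h1' : p.totient ∣ d.totient := Nat.totient_dvd_of_dvd hpd'
      have h2' : 0 < d.totient := Nat.totient_pos.mpr hd0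
      have h3' : p.totient ≤ d.totient := Nat.le_of_dvd h2' h1'
      have h4' : d.totient ≤ ∑ e ∈ s, Nat.totient e :=
        Finset.single_le_sum (fun e _ => Nat.zero_le _) hd
      rw [hsum] at h4'
      rw [Nat.totient_prime hpp] at h3'
      omega
    -- s ⊆ divisors of m / p
    have hsdiv : s ⊆ (m / p).divisors := by
      intro d hd
      have hd' : d ∈ m.divisors := hs hd
      have hdm : d ∣ m := Nat.dvd_of_mem_divisors hd'
      have hcop : Nat.Coprime p d := (Nat.Prime.coprime_iff_not_dvd hpp).mpr (hnotp d hd)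
      have hmul : p * d ∣ m := Nat.Coprime.mul_dvd_of_dvd_of_dvd hcop hpd hdm
      have hdvd : d ∣ m / p := (Nat.dvd_div_iff_mul_dvd hpd).mpr hmul
      exact Nat.mem_divisors.mpr ⟨hdvd, (Nat.div_pos hplm (by omega)).ne'⟩
    have hle : p - 2 ≤ m / p := by
      calc p - 2 = ∑ d ∈ s, Nat.totient d := hsum.symm
        _ ≤ ∑ d ∈ (m / p).divisors, Nat.totient d :=
            Finset.sum_le_sum_of_subset hsdiv
        _ = m / p := Nat.sum_totient _
    have hpos : 0 < p := by omega
    have hkey : (p - 2) * p ≤ m := (Nat.le_div_iff_mul_le hpos).mp hle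
    have hsq : (p - 2) * (p - 2) ≤ m :=
      le_trans (Nat.mul_le_mul_left _ (by omega)) hkey
    have hsqR : ((p:ℝ) - 2) ^ 2 ≤ (m : ℝ) := by
      have : (((p - 2 : ℕ)) : ℝ) * ((p - 2 : ℕ) : ℝ) ≤ (m : ℝ) := by
        exact_mod_cast hsq
      push_cast [Nat.cast_sub hp2] at this
      nlinarith
    have hs' : (p : ℝ) - 2 ≤ Real.sqrt m := by
      nlinarith [Real.sq_sqrt (show (0:ℝ) ≤ (m:ℝ) by positivity),
        Real.sqrt_nonneg (m:ℝ), hsqR]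
    linarith
end
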